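/- arXiv:2309.11733 — 7 statements merged into one kernel-verified Lean document; each statement's English description precedes it below -/
import Mathlib

section
/- Let G be a finite simple graph, let T be a family of triangles of G such that every edge of G lies in exactly one or exactly two triangles of T, and let R be an R-tiling with respect to T. Then the number of boundary edges of G that are black (i.e., boundary edges not in R) is even. -/
/-- Let `T` be a family of triangles of `G` such that every edge of `G`
lies in exactly one or exactly two triangles of `T`, and let `R` be an R-tiling with
respect to `T` (a set of edges, called red, such that every triangle of `T` contains
exactly one red edge). Then the number of boundary edges (edges lying in exactly one
triangle of `T`) that are black (not in `R`) is even. -/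
theorem stmt3 {V : Type*} [Fintype V] [DecidableEq V] (G : SimpleGraph V)
    [DecidableRel G.Adj]
    (T : Finset (Finset V))
    (hT : ∀ t ∈ T, t.card = 3 ∧ ∀ u ∈ t, ∀ v ∈ t, u ≠ v → G.Adj u v)
    (hcover : ∀ e ∈ G.edgeFinset,
      (T.filter fun t => e ∈ t.sym2).card = 1 ∨ (T.filter fun t => e ∈ t.sym2).card = 2)
    (R : Finset (Sym2 V)) (hR : R ⊆ G.edgeFinset)
    (htile : ∀ t ∈ T, (R.filter fun e => e ∈ t.sym2).card = 1) :
    Even ((G.edgeFinset.filter fun e =>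
      (T.filter fun t => e ∈ t.sym2).card = 1 ∧ e ∉ R).card) := by
  classical
  -- each triangle contains exactly 3 edges of G
  have key3 : ∀ t ∈ T, (G.edgeFinset.filter fun e => e ∈ t.sym2).card = 3 := by
    intro t ht
    obtain ⟨hcard, hadj⟩ := hT t ht
    obtain ⟨a, b, c, hab, hac, hbc, rfl⟩ := Finset.card_eq_three.mp hcard
    have habG : G.Adj a b := hadj a (by simp) b (by simp) hab
    have hacG : G.Adj a c := hadj a (by simp) c (by simp) hac
    have hbcG : G.Adj b c := hadj b (by simp) c (by simp) hbc
    have hset : (G.edgeFinset.filter fun e => e ∈ ({a,b,c} : Finset V).sym2)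
        = {s(a,b), s(a,c), s(b,c)} := by
      ext e
      induction e using Sym2.ind with
      | _ x y =>
        simp only [Finset.mem_filter, SimpleGraph.mem_edgeFinset, SimpleGraph.mem_edgeSet,
          Finset.mem_sym2_iff, Sym2.mem_iff, Finset.mem_insert, Finset.mem_singleton,
          Sym2.eq_iff, forall_eq_or_imp, forall_eq]
        constructor
        · rintro ⟨hxy, hx, hy⟩
          have hne := hxy.ne
          rcases hx with rfl|rfl|rfl <;> rcases hy with rfl|rfl|rfl <;> tauto
        · have h1 := habG.symm; have h2 := hacG.symm; have h3 := hbcG.symm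
          rintro ((⟨rfl,rfl⟩|⟨rfl,rfl⟩)|(⟨rfl,rfl⟩|⟨rfl,rfl⟩)|(⟨rfl,rfl⟩|⟨rfl,rfl⟩)) <;>
            refine ⟨by assumption, ?_, ?_⟩ <;> tauto
    rw [hset]
    rw [Finset.card_insert_of_notMem, Finset.card_insert_of_notMem, Finset.card_singleton]
    · simp [Sym2.eq_iff, hab, hac, hbc, hab.symm, hac.symm, hbc.symm]
    · simp [Sym2.eq_iff, hab, hac, hbc]
  -- each triangle contains exactly 2 black edges
  have key2 : ∀ t ∈ T, (G.edgeFinset.filter fun e => e ∈ t.sym2 ∧ e ∉ R).card = 2 := by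
    intro t ht
    have hsplit := Finset.card_filter_add_card_filter_not
      (s := G.edgeFinset.filter fun e => e ∈ t.sym2) (p := fun e => e ∈ R)
    have hred : ((G.edgeFinset.filter fun e => e ∈ t.sym2).filter fun e => e ∈ R)
        = R.filter fun e => e ∈ t.sym2 := by
      ext e
      simp only [Finset.mem_filter]
      exact ⟨fun h => ⟨h.2, h.1.2⟩, fun h => ⟨⟨hR h.1, h.2⟩, h.1⟩⟩
    rw [hred, htile t ht, key3 t ht] at hsplit
    have : ((G.edgeFinset.filter fun e => e ∈ t.sym2).filter fun e => ¬ e ∈ R)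
        = G.edgeFinset.filter fun e => e ∈ t.sym2 ∧ e ∉ R := by
      rw [Finset.filter_filter]
    rw [this] at hsplit
    omega
  -- main computation in ZMod 2
  have main : (((G.edgeFinset.filter fun e =>
      (T.filter fun t => e ∈ t.sym2).card = 1 ∧ e ∉ R).card : ℕ) : ZMod 2) = 0 := by
    rw [Finset.card_filter]
    push_cast
    have step1 : ∀ e ∈ G.edgeFinset,
        ((if (T.filter fun t => e ∈ t.sym2).card = 1 ∧ e ∉ R then 1 else 0 : ZMod 2))
          = ∑ t ∈ T, (if e ∈ t.sym2 ∧ e ∉ R then (1 : ZMod 2) else 0) := by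
      intro e he
      by_cases heR : e ∈ R
      · simp [heR]
      · have hsum : (∑ t ∈ T, (if e ∈ t.sym2 ∧ e ∉ R then (1 : ZMod 2) else 0))
            = ((T.filter fun t => e ∈ t.sym2).card : ZMod 2) := by
          simp only [heR, not_false_iff, and_true]
          exact Finset.sum_boole _ _
        rw [hsum]
        rcases hcover e he with h1 | h2
        · rw [if_pos ⟨h1, heR⟩, h1]
          norm_num
        · rw [if_neg (fun h => by omega), h2]
          decide
    rw [Finset.sum_congr rfl step1, Finset.sum_comm]
    have step2 : ∀ t ∈ T,
        (∑ e ∈ G.edgeFinset, (if e ∈ t.sym2 ∧ e ∉ R then (1 : ZMod 2) else 0)) = 0 := by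
      intro t ht
      rw [Finset.sum_boole, key2 t ht]
      decide
    rw [Finset.sum_congr rfl step2]
    simp
  have := (ZMod.natCast_eq_zero_iff _ 2).mp main
  exact even_iff_two_dvd.mpr this
end

section
/- Let G be a finite simple graph, let T be a family of triangles of G such that every edge of G lies in exactly one or exactly two triangles of T, and suppose G carries an RGB-tiling with respect to T. Then for each of the three colors, the number of boundary edges of that color is congruent modulo 2 to the total number of boundary edges; in particular, the three counts of red, green and blue boundary edges are either all even (when the total number of boundary edges is even) or all odd (when it is odd). -/
open Finset

lemma tri_edges {V : Type*} [Fintype V] [DecidableEq V] (G : SimpleGraph V)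
    [DecidableRel G.Adj] {t : Finset V} (h3 : t.card = 3)
    (hadj : ∀ u ∈ t, ∀ v ∈ t, u ≠ v → G.Adj u v) :
    ∃ u v w : V, u ≠ v ∧ u ≠ w ∧ v ≠ w ∧
      G.edgeFinset.filter (· ∈ t.sym2) = {s(u,v), s(u,w), s(v,w)} := by
  obtain ⟨u, v, w, huv, huw, hvw, rfl⟩ := Finset.card_eq_three.mp h3
  refine ⟨u, v, w, huv, huw, hvw, ?_⟩
  ext e
  induction e with
  | h a b =>
    simp only [mem_filter, SimpleGraph.mem_edgeFinset, SimpleGraph.mem_edgeSet,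
      Finset.mk_mem_sym2_iff, mem_insert, mem_singleton, Sym2.eq_iff]
    constructor
    · rintro ⟨hab, ha, hb⟩
      have hne := hab.ne
      rcases ha with rfl|rfl|rfl <;> rcases hb with rfl|rfl|rfl <;> tauto
    · intro h
      have hm : (a = u ∨ a = v ∨ a = w) ∧ (b = u ∨ b = v ∨ b = w) ∧ a ≠ b := by
        rcases h with (⟨rfl,rfl⟩|⟨rfl,rfl⟩)|(⟨rfl,rfl⟩|⟨rfl,rfl⟩)|(⟨rfl,rfl⟩|⟨rfl,rfl⟩) <;>
          tauto
      obtain ⟨ha, hb, hab⟩ := hm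
      have ha' : a ∈ ({u,v,w} : Finset V) := by
        simp only [mem_insert, mem_singleton]; tauto
      have hb' : b ∈ ({u,v,w} : Finset V) := by
        simp only [mem_insert, mem_singleton]; tauto
      exact ⟨hadj a ha' b hb' hab, ha, hb⟩

lemma tri_card {V : Type*} [Fintype V] [DecidableEq V] (G : SimpleGraph V)
    [DecidableRel G.Adj] {t : Finset V} (h3 : t.card = 3)
    (hadj : ∀ u ∈ t, ∀ v ∈ t, u ≠ v → G.Adj u v) :
    (G.edgeFinset.filter (· ∈ t.sym2)).card = 3 := by
  obtain ⟨u, v, w, huv, huw, hvw, he⟩ := tri_edges G h3 hadj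
  rw [he]
  rw [card_insert_of_notMem, card_insert_of_notMem, card_singleton] <;>
    simp [Sym2.eq_iff] <;> tauto

lemma col_count {V : Type*} [DecidableEq V] (E : Finset (Sym2 V)) (hE : E.card = 3)
    (c : Sym2 V → Fin 3)
    (hinj : ∀ e₁ ∈ E, ∀ e₂ ∈ E, c e₁ = c e₂ → e₁ = e₂) (col : Fin 3) :
    (E.filter (fun e => c e = col)).card = 1 := by
  have himg : (E.image c).card = 3 := by
    rw [Finset.card_image_of_injOn (fun a ha b hb => hinj a ha b hb), hE]
  have huniv : E.image c = Finset.univ := by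
    apply Finset.eq_univ_of_card
    simp [himg]
  have hcol : col ∈ E.image c := huniv ▸ Finset.mem_univ col
  obtain ⟨e, he, hce⟩ := Finset.mem_image.mp hcol
  rw [Finset.card_eq_one]
  refine ⟨e, ?_⟩
  ext x
  simp only [mem_filter, mem_singleton]
  constructor
  · rintro ⟨hx, hcx⟩
    exact hinj x hx e he (by rw [hcx, hce])
  · rintro rfl
    exact ⟨he, hce⟩

/-- Let `T` be a family of triangles of `G` such that every edge of `G`
lies in exactly one or exactly two triangles of `T`, and let `c` be an RGB-tiling with
respect to `T` (each edge gets one of three colors, the three edges of any triangle of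
`T` receiving pairwise distinct colors). Then for each color, the number of boundary
edges of that color is congruent mod 2 to the total number of boundary edges. -/
theorem stmt4 {V : Type*} [Fintype V] [DecidableEq V] (G : SimpleGraph V)
    [DecidableRel G.Adj]
    (T : Finset (Finset V))
    (hT : ∀ t ∈ T, t.card = 3 ∧ ∀ u ∈ t, ∀ v ∈ t, u ≠ v → G.Adj u v)
    (hcover : ∀ e ∈ G.edgeFinset,
      (T.filter fun t => e ∈ t.sym2).card = 1 ∨ (T.filter fun t => e ∈ t.sym2).card = 2)
    (c : Sym2 V → Fin 3)
    (htile : ∀ t ∈ T, ∀ e₁ ∈ G.edgeFinset, ∀ e₂ ∈ G.edgeFinset,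
      e₁ ∈ t.sym2 → e₂ ∈ t.sym2 → e₁ ≠ e₂ → c e₁ ≠ c e₂) :
    ∀ col : Fin 3,
      (G.edgeFinset.filter fun e =>
          (T.filter fun t => e ∈ t.sym2).card = 1 ∧ c e = col).card
        ≡ (G.edgeFinset.filter fun e =>
            (T.filter fun t => e ∈ t.sym2).card = 1).card [MOD 2] := by
  intro col
  set f : Sym2 V → ℕ := fun e => (T.filter fun t => e ∈ t.sym2).card with hf
  rw [← ZMod.natCast_eq_natCast_iff]
  -- general step: for A ⊆ edgeFinset, the count of boundary edges in A equals
  -- (mod 2) the sum over triangles of the number of A-edges in each triangle.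
  have step : ∀ A : Finset (Sym2 V), A ⊆ G.edgeFinset →
      ((A.filter (fun e => f e = 1)).card : ZMod 2)
        = ∑ t ∈ T, ((A.filter (· ∈ t.sym2)).card : ZMod 2) := by
    intro A hA
    have h0 : ∑ e ∈ A, f e = ∑ t ∈ T, (A.filter (· ∈ t.sym2)).card := by
      simp_rw [hf, Finset.card_filter]
      exact Finset.sum_comm
    have h1 : ((A.filter (fun e => f e = 1)).card : ZMod 2)
        = ∑ e ∈ A, (f e : ZMod 2) := by
      rw [← Finset.sum_filter_add_sum_filter_not A (fun e => f e = 1)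
        (fun e => (f e : ZMod 2))]
      have hL : ∑ e ∈ A.filter (fun e => f e = 1), (f e : ZMod 2)
          = (A.filter (fun e => f e = 1)).card := by
        rw [Finset.sum_congr rfl (fun e he => ?_), Finset.sum_const, nsmul_eq_mul,
          mul_one]
        rw [(Finset.mem_filter.mp he).2]
        norm_num
      have hR : ∑ e ∈ A.filter (fun e => ¬ f e = 1), (f e : ZMod 2) = 0 := by
        apply Finset.sum_eq_zero
        intro e he
        obtain ⟨heA, hne⟩ := Finset.mem_filter.mp he
        have := hcover e (hA heA)
        have h2 : f e = 2 := by tauto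
        rw [h2]; decide
      rw [hL, hR, add_zero]
    rw [h1]
    exact_mod_cast congrArg (Nat.cast : ℕ → ZMod 2) h0
  -- total boundary count
  have htot : ((G.edgeFinset.filter (fun e => f e = 1)).card : ZMod 2)
      = (T.card : ZMod 2) := by
    have h3 : ∀ t ∈ T, ((G.edgeFinset.filter (· ∈ t.sym2)).card : ZMod 2) = 1 := by
      intro t ht
      rw [tri_card G (hT t ht).1 (hT t ht).2]
      decide
    rw [step G.edgeFinset le_rfl, Finset.sum_congr rfl h3, Finset.sum_const,
      nsmul_eq_mul, mul_one]
  -- colored boundary count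
  have hcolc : ((G.edgeFinset.filter (fun e => f e = 1 ∧ c e = col)).card : ZMod 2)
      = (T.card : ZMod 2) := by
    have heq : G.edgeFinset.filter (fun e => f e = 1 ∧ c e = col)
        = (G.edgeFinset.filter (fun e => c e = col)).filter (fun e => f e = 1) := by
      rw [Finset.filter_filter]
      apply Finset.filter_congr
      intro x _
      tauto
    have h1 : ∀ t ∈ T,
        (((G.edgeFinset.filter (fun e => c e = col)).filter (· ∈ t.sym2)).card : ZMod 2)
          = 1 := by
      intro t ht
      have hcomm : (G.edgeFinset.filter (fun e => c e = col)).filter (· ∈ t.sym2)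
          = (G.edgeFinset.filter (· ∈ t.sym2)).filter (fun e => c e = col) := by
        rw [Finset.filter_filter, Finset.filter_filter]
        apply Finset.filter_congr
        intro x _
        tauto
      have hinj : ∀ e₁ ∈ G.edgeFinset.filter (· ∈ t.sym2),
          ∀ e₂ ∈ G.edgeFinset.filter (· ∈ t.sym2), c e₁ = c e₂ → e₁ = e₂ := by
        intro e₁ he₁ e₂ he₂ hc
        by_contra hne
        exact htile t ht e₁ (Finset.mem_filter.mp he₁).1 e₂ (Finset.mem_filter.mp he₂).1
          (Finset.mem_filter.mp he₁).2 (Finset.mem_filter.mp he₂).2 hne hc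
      rw [hcomm, col_count _ (tri_card G (hT t ht).1 (hT t ht).2) c hinj col]
      norm_num
    rw [heq, step _ (Finset.filter_subset _ _), Finset.sum_congr rfl h1,
      Finset.sum_const, nsmul_eq_mul, mul_one]
  rw [hcolc, htot]
end

section
/- Let G be a finite simple graph, let T be a family of triangles of G such that every edge of G lies in exactly one or exactly two triangles of T, and suppose G carries an RGB-tiling with respect to T in which every boundary edge is red. Then the number of boundary edges is even. -/
/-- Let `T` be a family of triangles of `G` such that every edge of `G`
lies in exactly one or exactly two triangles of `T`, and let `c` be an RGB-tiling with
respect to `T` in which every boundary edge has the color red (here `0 : Fin 3`).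
Then the number of boundary edges is even. -/
theorem stmt5 {V : Type*} [Fintype V] [DecidableEq V] (G : SimpleGraph V)
    [DecidableRel G.Adj]
    (T : Finset (Finset V))
    (hT : ∀ t ∈ T, t.card = 3 ∧ ∀ u ∈ t, ∀ v ∈ t, u ≠ v → G.Adj u v)
    (hcover : ∀ e ∈ G.edgeFinset,
      (T.filter fun t => e ∈ t.sym2).card = 1 ∨ (T.filter fun t => e ∈ t.sym2).card = 2)
    (c : Sym2 V → Fin 3)
    (htile : ∀ t ∈ T, ∀ e₁ ∈ G.edgeFinset, ∀ e₂ ∈ G.edgeFinset,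
      e₁ ∈ t.sym2 → e₂ ∈ t.sym2 → e₁ ≠ e₂ → c e₁ ≠ c e₂)
    (hred : ∀ e ∈ G.edgeFinset, (T.filter fun t => e ∈ t.sym2).card = 1 → c e = 0) :
    Even ((G.edgeFinset.filter fun e =>
      (T.filter fun t => e ∈ t.sym2).card = 1).card) := by
  classical
  -- per-triangle: exactly one edge of each color
  have htri : ∀ t ∈ T, ∀ k : Fin 3,
      (G.edgeFinset.filter fun e => e ∈ t.sym2 ∧ c e = k).card = 1 := by
    intro t ht k
    obtain ⟨hcard, hadj⟩ := hT t ht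
    obtain ⟨a, b, d, hab, had, hbd, rfl⟩ := Finset.card_eq_three.mp hcard
    have ha : a ∈ ({a, b, d} : Finset V) := by simp
    have hb : b ∈ ({a, b, d} : Finset V) := by simp
    have hd : d ∈ ({a, b, d} : Finset V) := by simp
    set A : Finset (Sym2 V) :=
      G.edgeFinset.filter (fun e => e ∈ ({a, b, d} : Finset V).sym2) with hA
    have hAeq : A = {s(a,b), s(a,d), s(b,d)} := by
      ext e
      induction e with
      | h x y =>
        simp only [hA, Finset.mem_filter, SimpleGraph.mem_edgeFinset,
          SimpleGraph.mem_edgeSet, Finset.mk_mem_sym2_iff, Finset.mem_insert,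
          Finset.mem_singleton]
        constructor
        · rintro ⟨hxy, hx, hy⟩
          have hne := hxy.ne
          rcases hx with rfl | rfl | rfl <;> rcases hy with rfl | rfl | rfl <;>
            first
              | exact absurd rfl hne
              | exact Or.inl rfl
              | exact Or.inl Sym2.eq_swap
              | exact Or.inr (Or.inl rfl)
              | exact Or.inr (Or.inl Sym2.eq_swap)
              | exact Or.inr (Or.inr rfl)
              | exact Or.inr (Or.inr Sym2.eq_swap)
        · intro h
          rcases h with h | h | h <;> rw [Sym2.eq_iff] at h <;>
            rcases h with ⟨rfl, rfl⟩ | ⟨rfl, rfl⟩ <;>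
            exact ⟨by first
              | exact hadj _ ha _ hb hab | exact hadj _ hb _ ha (Ne.symm hab)
              | exact hadj _ ha _ hd had | exact hadj _ hd _ ha (Ne.symm had)
              | exact hadj _ hb _ hd hbd | exact hadj _ hd _ hb (Ne.symm hbd),
              by simp [Finset.mk_mem_sym2_iff, ha, hb, hd],
              by simp [Finset.mk_mem_sym2_iff, ha, hb, hd]⟩
    have hAcard : A.card = 3 := by
      rw [hAeq]
      rw [Finset.card_insert_of_notMem, Finset.card_insert_of_notMem,
        Finset.card_singleton]
      · simp only [Finset.mem_singleton, Sym2.eq_iff]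
        tauto
      · simp only [Finset.mem_insert, Finset.mem_singleton, Sym2.eq_iff]
        tauto
    have hinj : Set.InjOn c A := by
      intro e₁ he₁ e₂ he₂ hce
      by_contra hne
      rw [hA] at he₁ he₂
      simp only [Finset.coe_filter, Set.mem_setOf_eq, Finset.mem_coe] at he₁ he₂
      exact htile _ ht e₁ he₁.1 e₂ he₂.1 he₁.2 he₂.2 hne hce
    have himg : A.image c = Finset.univ := by
      apply Finset.eq_univ_of_card
      rw [Finset.card_image_of_injOn hinj, hAcard]
      simp
    have : (A.filter fun e => c e = k).image c = {k} := by
      have := Finset.filter_image (s := A) (f := c) (p := fun x => x = k)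
      rw [himg] at this
      rw [← this, Finset.filter_eq']
      simp
    have hres : (A.filter fun e => c e = k).card = 1 := by
      rw [← Finset.card_image_of_injOn (hinj.mono (by
        intro x hx; exact Finset.mem_coe.mpr (Finset.filter_subset _ _ (Finset.mem_coe.mp hx)))),
        this, Finset.card_singleton]
    rw [← hres, hA, Finset.filter_filter]
  -- double counting
  have key : ∀ k : Fin 3, T.card =
      ∑ e ∈ G.edgeFinset.filter (fun e => c e = k),
        (T.filter fun t => e ∈ t.sym2).card := by
    intro k
    calc T.card = ∑ t ∈ T, 1 := Finset.card_eq_sum_ones T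
      _ = ∑ t ∈ T, (G.edgeFinset.filter fun e => e ∈ t.sym2 ∧ c e = k).card :=
          Finset.sum_congr rfl fun t ht => (htri t ht k).symm
      _ = ∑ t ∈ T, ∑ e ∈ G.edgeFinset, if e ∈ t.sym2 ∧ c e = k then 1 else 0 := by
          simp only [Finset.card_filter]
      _ = ∑ e ∈ G.edgeFinset, ∑ t ∈ T, if e ∈ t.sym2 ∧ c e = k then 1 else 0 :=
          Finset.sum_comm
      _ = ∑ e ∈ G.edgeFinset, if c e = k then (T.filter fun t => e ∈ t.sym2).card else 0 := by
          refine Finset.sum_congr rfl fun e _ => ?_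
          by_cases h : c e = k
          · rw [if_pos h, Finset.card_filter]
            exact Finset.sum_congr rfl fun t _ => by simp [h]
          · rw [if_neg h]
            exact Finset.sum_eq_zero fun t _ => by simp [h]
      _ = _ := (Finset.sum_filter _ _).symm
  -- green edges: all interior, so T.card is even
  have hTeven : Even T.card := by
    rw [key 1]
    have : ∀ e ∈ G.edgeFinset.filter (fun e => c e = 1),
        (T.filter fun t => e ∈ t.sym2).card = 2 := by
      intro e he
      rw [Finset.mem_filter] at he
      rcases hcover e he.1 with h1 | h2
      · exact absurd (hred e he.1 h1) (by rw [he.2]; decide)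
      · exact h2
    rw [Finset.sum_congr rfl this]
    simp [Finset.sum_const, mul_comm]
  -- red edges: boundary + twice interior-red
  have hsplit : T.card =
      (G.edgeFinset.filter fun e => (T.filter fun t => e ∈ t.sym2).card = 1).card
      + 2 * ((G.edgeFinset.filter fun e => c e = 0).filter
          fun e => (T.filter fun t => e ∈ t.sym2).card ≠ 1).card := by
    rw [key 0, ← Finset.sum_filter_add_sum_filter_not
      (G.edgeFinset.filter fun e => c e = 0)
      (fun e => (T.filter fun t => e ∈ t.sym2).card = 1)]
    congr 1
    · have heq : (G.edgeFinset.filter fun e => c e = 0).filter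
          (fun e => (T.filter fun t => e ∈ t.sym2).card = 1)
          = G.edgeFinset.filter fun e => (T.filter fun t => e ∈ t.sym2).card = 1 := by
        rw [Finset.filter_filter]
        refine Finset.filter_congr fun e he => ?_
        constructor
        · exact fun h => h.2
        · exact fun h => ⟨hred e he h, h⟩
      rw [← heq]
      rw [Finset.sum_congr rfl (fun e he => (Finset.mem_filter.mp he).2)]
      simp
    · have : ∀ e ∈ (G.edgeFinset.filter fun e => c e = 0).filter
          (fun e => ¬(T.filter fun t => e ∈ t.sym2).card = 1),
          (T.filter fun t => e ∈ t.sym2).card = 2 := by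
        intro e he
        simp only [Finset.mem_filter] at he
        rcases hcover e he.1.1 with h1 | h2
        · exact absurd h1 he.2
        · exact h2
      rw [Finset.sum_congr rfl this]
      simp [Finset.sum_const, mul_comm]
  rw [hsplit] at hTeven
  rcases Nat.even_add.mp hTeven with h
  exact h.mpr (even_two_mul _)
end

section
/- Let G be a simple graph and let f be a proper coloring of G with values in (ZMod 2) × (ZMod 2). Then for every closed walk in G of length m and for every nonzero element d of (ZMod 2) × (ZMod 2), the number of steps {u,v} of the walk (counted with multiplicity) satisfying f(u)+f(v) = d is congruent to m modulo 2. In particular, along every m-cycle of G the numbers of red, green and blue edges of the induced RGB-edge-coloring are all even if m is even and all odd if m is odd. -/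
private def gAux (d s : ZMod 2 × ZMod 2) : ZMod 2 :=
  if s = 0 then 0 else 1 + (if s = d then 1 else 0)

private lemma gAux_key : ∀ d t s : ZMod 2 × ZMod 2, d ≠ 0 → t ≠ 0 →
    gAux d s + (if t = d then 1 else 0) = gAux d (t + s) + 1 := by decide

private lemma add_self_zmod22 : ∀ a : ZMod 2 × ZMod 2, a + a = 0 := by decide

private lemma stmt7_aux {V : Type*} [DecidableEq V] (G : SimpleGraph V)
    (f : V → ZMod 2 × ZMod 2) (hf : ∀ u v : V, G.Adj u v → f u ≠ f v)
    (d : ZMod 2 × ZMod 2) (hd : d ≠ 0) :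
    ∀ {u v : V} (w : G.Walk u v),
    ((w.edges.filter fun e =>
        Sym2.lift ⟨fun x y => f x + f y, fun x y => add_comm (f x) (f y)⟩ e = d).length : ZMod 2)
      = w.length + gAux d (f u + f v) := by
  intro u v w
  induction w with
  | nil =>
      simp [add_self_zmod22, gAux]
  | @cons u x v h p ih =>
      have ht : f u + f x ≠ 0 := by
        intro h0
        apply hf u x h
        have := congrArg (· + f x) h0
        simpa [add_assoc, add_self_zmod22] using this
      have hsum : f u + f v = (f u + f x) + (f x + f v) := by
        rw [add_assoc, ← add_assoc (f x), add_self_zmod22, zero_add]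
      rw [SimpleGraph.Walk.edges_cons, List.filter_cons]
      simp only [Sym2.lift_mk, SimpleGraph.Walk.length_cons, hsum, Nat.cast_add, Nat.cast_one]
      rw [add_assoc, add_comm (1 : ZMod 2), ← gAux_key d (f u + f x) (f x + f v) hd ht]
      by_cases hc : f u + f x = d <;>
        simp [hc, ih, add_comm, add_left_comm, add_assoc]

/-- If `f` is a proper coloring of `G` with values in `(ZMod 2) × (ZMod 2)`,
then for every closed walk of length `m` and every nonzero `d`, the number of steps
`{u, v}` of the walk (with multiplicity) with `f u + f v = d` is congruent to `m` mod 2. -/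
theorem stmt7 {V : Type*} [DecidableEq V] (G : SimpleGraph V) (f : V → ZMod 2 × ZMod 2)
    (hf : ∀ u v : V, G.Adj u v → f u ≠ f v)
    (v : V) (w : G.Walk v v) (d : ZMod 2 × ZMod 2) (hd : d ≠ 0) :
    (w.edges.filter fun e =>
        Sym2.lift ⟨fun x y => f x + f y, fun x y => add_comm (f x) (f y)⟩ e = d).length
      ≡ w.length [MOD 2] := by
  have := stmt7_aux G f hf d hd w
  rw [add_self_zmod22] at this
  have h0 : gAux d 0 = 0 := by simp [gAux]
  rw [h0, add_zero] at this
  exact (ZMod.natCast_eq_natCast_iff _ _ _).mp this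
end

section
/- Let G be a simple graph, let f be a proper vertex coloring of G with values in a type α, and let a, b be two distinct colors in α. Let S be a set of vertices such that every vertex of S has f-color a or b, and such that S is closed under adjacency within the subgraph induced on the vertices colored a or b (i.e., if u ∈ S, v is adjacent to u, and f(v) ∈ {a,b}, then v ∈ S). Define g by: g(v) = b if v ∈ S and f(v) = a; g(v) = a if v ∈ S and f(v) = b; and g(v) = f(v) otherwise. Then g is again a proper vertex coloring of G. -/
/-- Kempe chain color switching: Let `f` be a proper coloring of `G`
with values in `α`, let `a ≠ b` be two colors, and let `S` be a set of vertices all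
colored `a` or `b` that is closed under adjacency within the `{a, b}`-colored subgraph.
Swapping `a` and `b` on `S` yields again a proper coloring `g`. -/
theorem stmt12 {V : Type*} {α : Type*} (G : SimpleGraph V) (f : V → α)
    (hf : ∀ u v : V, G.Adj u v → f u ≠ f v)
    (a b : α) (hab : a ≠ b)
    (S : Set V)
    (hS1 : ∀ v ∈ S, f v = a ∨ f v = b)
    (hS2 : ∀ u ∈ S, ∀ v : V, G.Adj u v → (f v = a ∨ f v = b) → v ∈ S)
    (g : V → α)
    (hg : ∀ v : V,
      (v ∈ S → (f v = a → g v = b) ∧ (f v = b → g v = a)) ∧ (v ∉ S → g v = f v)) :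
    ∀ u v : V, G.Adj u v → g u ≠ g v := by
  intro u v huv heq
  by_cases hu : u ∈ S <;> by_cases hv : v ∈ S
  · rcases hS1 u hu with ha | hb <;> rcases hS1 v hv with ha' | hb'
    · exact hf u v huv (ha.trans ha'.symm)
    · rw [(hg u).1 hu |>.1 ha, (hg v).1 hv |>.2 hb'] at heq; exact hab heq.symm
    · rw [(hg u).1 hu |>.2 hb, (hg v).1 hv |>.1 ha'] at heq; exact hab heq
    · exact hf u v huv (hb.trans hb'.symm)
  · -- u ∈ S, v ∉ S, so f v ∉ {a,b}
    rw [(hg v).2 hv] at heq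
    rcases hS1 u hu with ha | hb
    · rw [(hg u).1 hu |>.1 ha] at heq
      exact hv (hS2 u hu v huv (Or.inr heq.symm))
    · rw [(hg u).1 hu |>.2 hb] at heq
      exact hv (hS2 u hu v huv (Or.inl heq.symm))
  · rw [(hg u).2 hu] at heq
    rcases hS1 v hv with ha | hb
    · rw [(hg v).1 hv |>.1 ha] at heq
      exact hu (hS2 v hv u huv.symm (Or.inr heq))
    · rw [(hg v).1 hv |>.2 hb] at heq
      exact hu (hS2 v hv u huv.symm (Or.inl heq))
  · rw [(hg u).2 hu, (hg v).2 hv] at heq; exact hf u v huv heq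
end

section
/- Let G be a connected finite simple graph, let T be a family of triangles of G such that every edge of G lies in at least one triangle of T, and let R be an R-tiling with respect to T. Then the spanning subgraph of G whose edge set consists of the black edges (the edges not in R) is connected. -/
/-- Let `G` be connected, `T` a family of triangles covering every edge
at least once, and `R` an R-tiling w.r.t. `T`. Then the spanning subgraph of `G` whose
edges are the black edges (edges not in `R`) is connected. -/
theorem stmt15 {V : Type*} [Fintype V] [DecidableEq V] (G : SimpleGraph V)
    [DecidableRel G.Adj] (hconn : G.Connected)
    (T : Finset (Finset V))
    (hT : ∀ t ∈ T, t.card = 3 ∧ ∀ u ∈ t, ∀ v ∈ t, u ≠ v → G.Adj u v)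
    (hcover : ∀ e ∈ G.edgeFinset, ∃ t ∈ T, e ∈ t.sym2)
    (R : Finset (Sym2 V)) (hR : R ⊆ G.edgeFinset)
    (htile : ∀ t ∈ T, (R.filter fun e => e ∈ t.sym2).card = 1) :
    (SimpleGraph.fromEdgeSet {e : Sym2 V | e ∈ G.edgeSet ∧ e ∉ R}).Connected := by
  set G' := SimpleGraph.fromEdgeSet {e : Sym2 V | e ∈ G.edgeSet ∧ e ∉ R} with hG'
  have hadj : ∀ {u v : V}, G.Adj u v → s(u, v) ∉ R → G'.Adj u v := by
    intro u v huv hnr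
    rw [hG', SimpleGraph.fromEdgeSet_adj]
    exact ⟨⟨huv, hnr⟩, huv.ne⟩
  have key : ∀ u v : V, G.Adj u v → G'.Reachable u v := by
    intro u v huv
    by_cases hr : s(u, v) ∈ R
    · -- red edge: go through the third vertex of a triangle
      obtain ⟨t, htT, hmem⟩ := hcover s(u, v) (SimpleGraph.mem_edgeFinset.mpr huv)
      obtain ⟨hcard, hadjT⟩ := hT t htT
      rw [Finset.mk_mem_sym2_iff] at hmem
      obtain ⟨hu, hv⟩ := hmem
      -- find third vertex
      have hsub : ({u, v} : Finset V) ⊆ t := by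
        intro x hx
        simp only [Finset.mem_insert, Finset.mem_singleton] at hx
        rcases hx with rfl | rfl <;> assumption
      have hcard2 : ({u, v} : Finset V).card = 2 := by
        rw [Finset.card_insert_of_notMem (by simp [huv.ne]), Finset.card_singleton]
      have hne : (t \ {u, v}).Nonempty := by
        rw [← Finset.card_pos, Finset.card_sdiff_of_subset hsub, hcard, hcard2]
        omega
      obtain ⟨w, hw⟩ := hne
      rw [Finset.mem_sdiff] at hw
      obtain ⟨hwt, hwuv⟩ := hw
      simp only [Finset.mem_insert, Finset.mem_singleton, not_or] at hwuv
      obtain ⟨hwu, hwv⟩ := hwuv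
      have huvR : s(u, v) ∈ R.filter fun e => e ∈ t.sym2 := by
        rw [Finset.mem_filter]
        exact ⟨hr, Finset.mk_mem_sym2_iff.mpr ⟨hu, hv⟩⟩
      have hsingle := Finset.card_eq_one.mp (htile t htT)
      obtain ⟨a, ha⟩ := hsingle
      rw [ha, Finset.mem_singleton] at huvR
      have hblack : ∀ {x y : V}, x ∈ t → y ∈ t → s(x, y) ≠ s(u, v) → s(x, y) ∉ R := by
        intro x y hx hy hne hmem
        have : s(x, y) ∈ R.filter fun e => e ∈ t.sym2 := by
          rw [Finset.mem_filter]
          exact ⟨hmem, Finset.mk_mem_sym2_iff.mpr ⟨hx, hy⟩⟩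
        rw [ha, Finset.mem_singleton] at this
        exact hne (this.trans huvR.symm)
      have h1 : G'.Adj u w := by
        refine hadj (hadjT u hu w hwt (Ne.symm hwu)) (hblack hu hwt ?_)
        intro h
        rw [Sym2.eq_iff] at h
        rcases h with ⟨_, h2⟩ | ⟨_, h2⟩
        · exact hwv h2
        · exact hwu h2
      have h2 : G'.Adj w v := by
        refine hadj (hadjT w hwt v hv hwv) (hblack hwt hv ?_)
        intro h
        rw [Sym2.eq_iff] at h
        rcases h with ⟨h1, _⟩ | ⟨h1, _⟩
        · exact hwu h1
        · exact hwv h1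
      exact h1.reachable.trans h2.reachable
    · exact (hadj huv hr).reachable
  rw [SimpleGraph.connected_iff]
  refine ⟨?_, hconn.nonempty⟩
  intro u v
  obtain ⟨p⟩ := hconn.preconnected u v
  induction p with
  | nil => exact SimpleGraph.Reachable.refl _
  | cons h p ih => exact (key _ _ h).trans ih
end

section
/- Let G be a connected finite simple graph, let T be a family of triangles of G such that every edge of G lies in at least one triangle of T, and suppose G carries an RGB-tiling with respect to T with the following parity property: for every cycle of G of length m and each of the three colors, the number of edges of that color on the cycle is congruent to m modulo 2. Then G is 4-colorable (admits a proper vertex coloring with 4 colors). -/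
open SimpleGraph

/-- Embedding of the three colors into the Klein four-group. -/
def stmt16ι : Fin 3 → ZMod 2 × ZMod 2 := ![(1,0),(0,1),(1,1)]

lemma stmt16_addself : ∀ x : ZMod 2 × ZMod 2, x + x = 0 := by decide

lemma stmt16ι_ne_zero (i : Fin 3) : stmt16ι i ≠ 0 := by fin_cases i <;> decide

lemma stmt16_nsmul_mod (n : ℕ) (x : ZMod 2 × ZMod 2) : n • x = (n % 2) • x := by
  conv_lhs => rw [← Nat.div_add_mod n 2]
  rw [add_nsmul, mul_nsmul, two_nsmul, stmt16_addself, smul_zero, zero_add]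

section
variable {V : Type*} (G : SimpleGraph V) (c : Sym2 V → Fin 3)

/-- Sum of the Klein-group values of the edge colors along a walk. -/
def wsum {u v : V} (w : G.Walk u v) : ZMod 2 × ZMod 2 :=
  (w.edges.map fun e => stmt16ι (c e)).sum

variable {G c}

lemma wsum_nil {v : V} : wsum G c (Walk.nil : G.Walk v v) = 0 := rfl

lemma wsum_cons {u v x : V} (h : G.Adj u x) (p : G.Walk x v) :
    wsum G c (Walk.cons h p) = stmt16ι (c s(u, x)) + wsum G c p := by
  simp [wsum]

lemma wsum_append {u v x : V} (p : G.Walk u x) (q : G.Walk x v) :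
    wsum G c (p.append q) = wsum G c p + wsum G c q := by
  simp [wsum]

lemma wsum_reverse {u v : V} (p : G.Walk u v) :
    wsum G c p.reverse = wsum G c p := by
  simp [wsum]

lemma stmt16_sum_by_color (l : List (Sym2 V)) :
    (l.map fun e => stmt16ι (c e)).sum =
      (l.filter fun e => c e = 0).length • stmt16ι 0 +
      (l.filter fun e => c e = 1).length • stmt16ι 1 +
      (l.filter fun e => c e = 2).length • stmt16ι 2 := by
  induction l with
  | nil => simp
  | cons e l ih =>
    simp only [List.map_cons, List.sum_cons, List.filter_cons, ih]
    generalize c e = x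
    fin_cases x <;> simp [succ_nsmul] <;> ring

/-- A path between the endpoints of an edge containing that edge has length 1. -/
lemma stmt16_path_len {x v : V} (p : G.Walk x v) (hp : p.IsPath)
    (he : s(x, v) ∈ p.edges) : p.length = 1 := by
  cases p with
  | nil => simp at he
  | @cons _ y _ h' q =>
    rw [Walk.edges_cons, List.mem_cons] at he
    rcases he with he | he
    · have hvy : v = y := by
        rcases Sym2.eq_iff.mp he with ⟨-, h1⟩ | ⟨h1, -⟩
        · exact h1
        · exact absurd h1 h'.ne
      subst hvy
      have hq : q.IsPath := (Walk.cons_isPath_iff h' q).mp hp |>.1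
      cases q with
      | nil => simp
      | @cons _ z _ h2 r =>
        exfalso
        have : v ∈ r.support := r.end_mem_support
        have hnd := hq.support_nodup
        rw [Walk.support_cons] at hnd
        exact (List.nodup_cons.mp hnd).1 this
    · exfalso
      have hx : x ∈ q.support := q.fst_mem_support_of_mem_edges he
      exact ((Walk.cons_isPath_iff h' q).mp hp).2 hx

lemma stmt16_cycle_sum {v : V} (w : G.Walk v v) (hw : w.IsCycle)
    (hpar : ∀ col : Fin 3,
      (w.edges.filter fun e => c e = col).length ≡ w.length [MOD 2]) :
    wsum G c w = 0 := by
  have e0 : (w.edges.filter fun e => c e = (0 : Fin 3)).length • stmt16ι 0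
      = (w.length % 2) • stmt16ι 0 := by
    rw [stmt16_nsmul_mod, (hpar 0 : _ % 2 = _ % 2)]
  have e1 : (w.edges.filter fun e => c e = (1 : Fin 3)).length • stmt16ι 1
      = (w.length % 2) • stmt16ι 1 := by
    rw [stmt16_nsmul_mod, (hpar 1 : _ % 2 = _ % 2)]
  have e2 : (w.edges.filter fun e => c e = (2 : Fin 3)).length • stmt16ι 2
      = (w.length % 2) • stmt16ι 2 := by
    rw [stmt16_nsmul_mod, (hpar 2 : _ % 2 = _ % 2)]
  rw [wsum, stmt16_sum_by_color, e0, e1, e2, ← smul_add, ← smul_add]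
  have h012 : stmt16ι 0 + stmt16ι 1 + stmt16ι 2 = 0 := by decide
  rw [h012, smul_zero]

lemma stmt16_closed_sum [DecidableEq V] : ∀ (n : ℕ) {v : V} (w : G.Walk v v),
    (hpar : ∀ (u : V) (w : G.Walk u u), w.IsCycle → ∀ col : Fin 3,
      (w.edges.filter fun e => c e = col).length ≡ w.length [MOD 2]) →
    w.length = n → wsum G c w = 0 := by
  intro n
  induction n using Nat.strong_induction_on with
  | _ n IH =>
  intro v w hpar hlen
  by_cases hcyc : w.IsCycle
  · exact stmt16_cycle_sum w hcyc (hpar v w hcyc)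
  by_cases htail : w.support.tail.Nodup
  · -- no repeated vertex: walk is nil, or cons on a path
    cases w with
    | nil => exact wsum_nil
    | @cons _ x _ h p =>
      have hps : p.support = (Walk.cons h p).support.tail := by
        rw [Walk.support_cons]; rfl
      have hp : p.IsPath := by rw [Walk.isPath_def, hps]; exact htail
      have hedge : s(v, x) ∈ p.edges := by
        by_contra hne
        exact hcyc ((Walk.cons_isCycle_iff p h).mpr ⟨hp, hne⟩)
      have hedge' : s(x, v) ∈ p.edges := by rwa [Sym2.eq_swap] at hedge
      have hlen1 : p.length = 1 := stmt16_path_len p hp hedge'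
      cases p with
      | nil => simp at hlen1
      | @cons _ y _ h2 q =>
        have hq0 : q.length = 0 := by simpa using hlen1
        have : q.Nil := Walk.nil_iff_length_eq.mpr hq0
        cases q with
        | nil =>
          rw [wsum_cons, wsum_cons, wsum_nil, add_zero]
          rw [show s(x, v) = s(v, x) from Sym2.eq_swap]
          exact stmt16_addself _
        | cons h3 r => simp at this
  · -- repeated vertex in the tail: split the walk into two shorter closed walks
    obtain ⟨u, hcount⟩ : ∃ u, 2 ≤ w.support.tail.count u := by
      by_contra hno
      push_neg at hno
      exact htail (List.nodup_iff_count_le_one.mpr fun a => by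
        have := hno a; omega)
    have hu : u ∈ w.support := by
      apply List.mem_of_mem_tail
      exact List.count_pos_iff.mp (by omega)
    have hcw : 2 ≤ w.support.count u := by
      rw [w.support_eq_cons, List.count_cons]
      split <;> omega
    set A := w.takeUntil u hu with hA
    set R := w.dropUntil u hu with hR
    have hspec : A.append R = w := w.take_spec hu
    have hcA : A.support.count u = 1 := w.count_support_takeUntil_eq_one hu
    clear_value A R
    have hsupp : w.support = A.support ++ R.support.tail := by
      rw [← hspec, Walk.support_append]
    have hcR : 1 ≤ R.support.tail.count u := by
      have := congrArg (List.count u) hsupp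
      rw [List.count_append, hcA] at this
      omega
    cases R with
    | nil => simp at hcR
    | @cons _ x _ h q =>
      rw [Walk.support_cons, List.tail_cons] at hcR
      have huq : u ∈ q.support := List.count_pos_iff.mp (by omega)
      set B : G.Walk u u := Walk.cons h (q.takeUntil u huq) with hB
      set C := q.dropUntil u huq with hC
      have hcT : (q.takeUntil u huq).support.count u = 1 :=
        q.count_support_takeUntil_eq_one huq
      have hqspec : (q.takeUntil u huq).append C = q := q.take_spec huq
      have hqsupp : q.support = (q.takeUntil u huq).support ++ C.support.tail := by
        have h' := (congrArg Walk.support hqspec).symm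
        rwa [Walk.support_append] at h'
      have hBC : B.append C = Walk.cons h q := by
        rw [hB, Walk.cons_append, hqspec]
      have hw2 : w = A.append (B.append C) := by rw [hBC, ← hspec]
      -- `C` has positive length
      have hClen : 1 ≤ C.length := by
        by_contra hc0
        push_neg at hc0
        have hc0 : C.length = 0 := by omega
        have huv : u = v := Walk.eq_of_length_eq_zero hc0
        subst huv
        -- then `u` occurs at least twice in `q.support`, so `C.support.tail` contains `u`
        have hcw3 : 3 ≤ w.support.count u := by
          rw [w.support_eq_cons, List.count_cons_self]
          omega
        have hcq : 2 ≤ q.support.count u := by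
          have hct := congrArg (List.count u) hsupp
          rw [List.count_append, hcA, Walk.support_cons, List.tail_cons] at hct
          omega
        have hcC : 1 ≤ C.support.tail.count u := by
          have := congrArg (List.count u) hqsupp
          rw [List.count_append, hcT] at this
          omega
        have hCt : C.support.tail.length = 0 := by
          have h1 := C.length_support
          have h2 : C.support.tail.length = C.support.length - 1 := C.support.length_tail
          omega
        rw [List.length_eq_zero_iff.mp hCt] at hcC
        simp at hcC
      have hlenw : w.length = A.length + (B.length + C.length) := by
        rw [hw2, Walk.length_append, Walk.length_append]
      have hBlen : 1 ≤ B.length := by rw [hB, Walk.length_cons]; omega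
      have hBsmall : B.length < n := by omega
      have hACsmall : (A.append C).length < n := by
        rw [Walk.length_append]; omega
      have hSB : wsum G c B = 0 := IH B.length hBsmall B hpar rfl
      have hSAC : wsum G c (A.append C) = 0 := IH _ hACsmall (A.append C) hpar rfl
      rw [hw2, wsum_append, wsum_append]
      rw [wsum_append] at hSAC
      calc wsum G c A + (wsum G c B + wsum G c C)
          = (wsum G c A + wsum G c C) + wsum G c B := by abel
        _ = 0 := by rw [hSAC, zero_add, hSB]

end

/-- Let `G` be connected, `T` a family of triangles covering every edge
at least once, and `c` an RGB-tiling w.r.t. `T` with the parity property: along every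
cycle of length `m`, the number of edges of each of the three colors is congruent to
`m` mod 2. Then `G` is 4-colorable. -/
theorem stmt16 {V : Type*} [Fintype V] [DecidableEq V] (G : SimpleGraph V)
    [DecidableRel G.Adj] (hconn : G.Connected)
    (T : Finset (Finset V))
    (hT : ∀ t ∈ T, t.card = 3 ∧ ∀ u ∈ t, ∀ v ∈ t, u ≠ v → G.Adj u v)
    (hcover : ∀ e ∈ G.edgeFinset, ∃ t ∈ T, e ∈ t.sym2)
    (c : Sym2 V → Fin 3)
    (htile : ∀ t ∈ T, ∀ e₁ ∈ G.edgeFinset, ∀ e₂ ∈ G.edgeFinset,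
      e₁ ∈ t.sym2 → e₂ ∈ t.sym2 → e₁ ≠ e₂ → c e₁ ≠ c e₂)
    (hparity : ∀ (v : V) (w : G.Walk v v), w.IsCycle → ∀ col : Fin 3,
      (w.edges.filter fun e => c e = col).length ≡ w.length [MOD 2]) :
    G.Colorable 4 := by
  obtain ⟨v0⟩ := hconn.nonempty
  have hclosed : ∀ {v : V} (w : G.Walk v v), wsum G c w = 0 := fun w =>
    stmt16_closed_sum w.length w hparity rfl
  -- color each vertex by the Klein-group sum along any walk from `v0`
  let f : V → ZMod 2 × ZMod 2 := fun v => wsum G c ((hconn.preconnected v0 v).some)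
  have hproper : ∀ {a b : V}, G.Adj a b → f a ≠ f b := by
    intro a b hab hfab
    set pa := (hconn.preconnected v0 a).some with hpa
    set pb := (hconn.preconnected v0 b).some with hpb
    have h0 := hclosed (pa.append (Walk.cons hab pb.reverse))
    rw [wsum_append, wsum_cons, wsum_reverse] at h0
    have hfa : f a = wsum G c pa := rfl
    have hfb : f b = wsum G c pb := rfl
    rw [← hfa, ← hfb, ← hfab] at h0
    have h1 : stmt16ι (c s(a, b)) = 0 := by
      have h2 := stmt16_addself (f a)
      calc stmt16ι (c s(a, b))
          = f a + (stmt16ι (c s(a, b)) + f a) - (f a + f a) := by abel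
        _ = 0 - 0 := by rw [h0, h2]
        _ = 0 := by simp
    exact stmt16ι_ne_zero _ h1
  have hcol : G.Coloring (ZMod 2 × ZMod 2) := SimpleGraph.Coloring.mk f hproper
  have := hcol.colorable
  have hcard : Fintype.card (ZMod 2 × ZMod 2) = 4 := by simp
  rwa [hcard] at this
end
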